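/- arXiv:1606.09588 — 2 statements merged into one kernel-verified Lean document; each statement's English description precedes it below -/
import Mathlib

section
/- Let n ≥ 2 be an even integer, let 0 < p ≤ 1/4, and let t be an even positive integer with t ≤ 1/(n²·p). Then the involution walk satisfies ‖P^{*t} − U‖_TV ≥ 1/2 − 1/n. -/
open Finset

/-- One step of the involution walk on `S_n`: an involution `σ` with `s` transpositions
(so `σ.support.card = 2*s`) has probability
`(n/2 choose s) * p^(n/2-s) * (1-p)^s * 2^s * s! * (n-2s)! / n!`;
non-involutions have probability `0`. -/
noncomputable def stepP (n : ℕ) (p : ℝ) (σ : Equiv.Perm (Fin n)) : ℝ :=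
  if σ * σ = 1 then
    ((n / 2).choose (σ.support.card / 2) : ℝ) * p ^ (n / 2 - σ.support.card / 2) *
      (1 - p) ^ (σ.support.card / 2) * (2 : ℝ) ^ (σ.support.card / 2) *
      (Nat.factorial (σ.support.card / 2) : ℝ) * (Nat.factorial (n - σ.support.card) : ℝ) /
      (Nat.factorial n : ℝ)
  else 0

/-- The `t`-step distribution of the involution walk:
`P^{*t}(g) = Σ_{g₁⋯g_t = g} P(g₁)⋯P(g_t)`, defined by convolution. -/
noncomputable def convPow (n : ℕ) (p : ℝ) : ℕ → Equiv.Perm (Fin n) → ℝ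
  | 0 => fun g => if g = 1 then 1 else 0
  | t + 1 => fun g => ∑ h : Equiv.Perm (Fin n), stepP n p h * convPow n p t (h⁻¹ * g)

/-- Total variation distance between `P^{*t}` and the uniform distribution:
`(1/2) Σ_g |P^{*t}(g) − 1/n!|`. -/
noncomputable def tvDist (n : ℕ) (p : ℝ) (t : ℕ) : ℝ :=
  (1 / 2) * ∑ g : Equiv.Perm (Fin n), |convPow n p t g - 1 / (Nat.factorial n : ℝ)|

/-!
Pair `P^{*t} − U` with the sign character. Since the signs sum to zero, the total variation
distance is at least `½ |Σ_g sign(g) P^{*t}(g)| = ½ |Σ_g sign(g) P(g)|^t`. An involution with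
`s` transpositions has sign `(−1)^s`, and the weights of `P` are chosen so that the `s`-th
class has total mass `C(n/2, s) p^(n/2−s) (1−p)^s`; hence `Σ_g sign(g) P(g) = (2p − 1)^(n/2)`.
For even `t` Bernoulli's inequality gives `(2p − 1)^(nt/2) ≥ 1 − ntp ≥ 1 − 1/n`.
-/

open Equiv Equiv.Perm Nat

namespace Equiv.Perm

variable {α : Type*} [Fintype α] [DecidableEq α]

theorem cycleType_eq_replicate_two_iff {σ : Perm α} {k : ℕ} :
    σ.cycleType = Multiset.replicate k 2 ↔ σ ^ 2 = 1 ∧ σ.cycleType.card = k := by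
  constructor
  · intro h
    exact ⟨pow_prime_eq_one_iff.mpr fun c hc => Multiset.eq_of_mem_replicate (h ▸ hc),
      by rw [h, Multiset.card_replicate]⟩
  · rintro ⟨h, rfl⟩
    exact cycleType_of_pow_prime_eq_one h

theorem card_support_of_cycleType_eq_replicate_two {σ : Perm α} {k : ℕ}
    (h : σ.cycleType = Multiset.replicate k 2) : σ.support.card = 2 * k := by
  rw [← sum_cycleType, h, Multiset.sum_replicate, smul_eq_mul, mul_comm]

theorem sign_of_cycleType_eq_replicate_two {σ : Perm α} {k : ℕ}
    (h : σ.cycleType = Multiset.replicate k 2) : sign σ = (-1) ^ k := by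
  rw [sign_of_cycleType', h, Multiset.map_replicate, Multiset.prod_replicate]
  norm_num

theorem card_cycleType_eq_replicate_two_mul {k : ℕ} (hk : 2 * k ≤ Fintype.card α) :
    #({σ | σ.cycleType = Multiset.replicate k 2} : Finset (Perm α)) *
      (2 ^ k * k ! * (Fintype.card α - 2 * k)!) = (Fintype.card α)! := by
  have hcount : ∏ c ∈ (Multiset.replicate k 2).toFinset,
      ((Multiset.replicate k 2).count c)! = k ! := by
    rw [prod_subset (s₂ := {2}) (fun c hc => by simp [Multiset.eq_of_mem_replicate
        (Multiset.mem_toFinset.mp hc)]) (fun c _ hc => by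
        rw [Multiset.count_eq_zero_of_notMem (fun hc' => hc (Multiset.mem_toFinset.mpr hc')),
          factorial_zero]),
      prod_singleton, Multiset.count_replicate_self]
  have := card_of_cycleType_mul_eq α (Multiset.replicate k 2)
  rw [if_pos ⟨by simpa [mul_comm] using hk, fun c hc => (Multiset.eq_of_mem_replicate hc).ge⟩,
    hcount, Multiset.sum_replicate, Multiset.prod_replicate, smul_eq_mul, mul_comm k 2] at this
  rw [← this]
  ring

end Equiv.Perm

def realSign (α : Type*) [Fintype α] [DecidableEq α] : Perm α →* ℝ :=
  (Int.castRingHom ℝ).toMonoidHom.comp ((Units.coeHom ℤ).comp sign)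

section RealSign

variable {α : Type*} [Fintype α] [DecidableEq α]

@[simp]
theorem realSign_apply (σ : Perm α) : realSign α σ = ((sign σ : ℤ) : ℝ) := rfl

theorem abs_realSign (σ : Perm α) : |realSign α σ| = 1 := by
  rcases Int.units_eq_one_or (sign σ) with h | h <;> simp [h]

theorem sum_realSign_eq_zero [Nontrivial α] : ∑ σ : Perm α, realSign α σ = 0 := by
  refine sum_hom_units_eq_zero _ fun h => ?_
  obtain ⟨x, y, hxy⟩ := exists_pair_ne α
  have := DFunLike.congr_fun h (swap x y)
  norm_num [sign_swap hxy] at this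

theorem abs_sum_realSign_mul_le [Nontrivial α] (f : Perm α → ℝ) (c : ℝ) :
    |∑ σ, realSign α σ * f σ| ≤ ∑ σ, |f σ - c| :=
  calc |∑ σ, realSign α σ * f σ| = |∑ σ, realSign α σ * (f σ - c)| := by
        simp only [mul_sub, sum_sub_distrib, ← sum_mul, sum_realSign_eq_zero, zero_mul, sub_zero]
    _ ≤ ∑ σ, |realSign α σ * (f σ - c)| := abs_sum_le_sum_abs _ _
    _ = ∑ σ, |f σ - c| := by simp only [abs_mul, abs_realSign, one_mul]

end RealSign

section InvolutionWalk

variable {n : ℕ} {p : ℝ}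

theorem sum_mul_convPow (χ : Perm (Fin n) →* ℝ) (t : ℕ) :
    ∑ g, χ g * convPow n p t g = (∑ g, χ g * stepP n p g) ^ t := by
  induction t with
  | zero => simp [convPow]
  | succ t ih =>
    calc ∑ g, χ g * convPow n p (t + 1) g
        = ∑ h, stepP n p h * ∑ g, χ g * convPow n p t (h⁻¹ * g) := by
          simp only [convPow, mul_sum]
          rw [sum_comm]
          exact sum_congr rfl fun _ _ => sum_congr rfl fun _ _ => by ring
      _ = ∑ h, stepP n p h * (χ h * ∑ g, χ g * convPow n p t g) := by
          refine sum_congr rfl fun h _ => congrArg _ ?_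
          rw [mul_sum, ← Equiv.sum_comp (Equiv.mulLeft h)]
          simp only [coe_mulLeft, inv_mul_cancel_left, map_mul, mul_assoc]
      _ = (∑ g, χ g * stepP n p g) ^ (t + 1) := by
          rw [ih, _root_.pow_succ, mul_sum]
          exact sum_congr rfl fun _ _ => by ring

theorem stepP_of_cycleType_eq_replicate_two {σ : Perm (Fin n)} {k : ℕ}
    (h : σ.cycleType = Multiset.replicate k 2) :
    stepP n p σ = (n / 2).choose k * p ^ (n / 2 - k) * (1 - p) ^ k * 2 ^ k * k ! *
      (n - 2 * k)! / n ! := by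
  have hσ : σ * σ = 1 := by rw [← sq]; exact (cycleType_eq_replicate_two_iff.mp h).1
  rw [stepP, if_pos hσ, card_support_of_cycleType_eq_replicate_two h,
    Nat.mul_div_cancel_left k two_pos]

theorem stepP_eq_zero_of_sq_ne_one {σ : Perm (Fin n)} (h : σ ^ 2 ≠ 1) : stepP n p σ = 0 := by
  rw [stepP, if_neg (by rwa [← sq])]

theorem sum_realSign_mul_stepP_of_cycleType {m k : ℕ} (hk : k ≤ m) :
    ∑ σ : Perm (Fin (2 * m)) with σ.cycleType = Multiset.replicate k 2,
      realSign _ σ * stepP (2 * m) p σ = (-(1 - p)) ^ k * p ^ (m - k) * m.choose k := by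
  have hcard : (#{σ : Perm (Fin (2 * m)) | σ.cycleType = Multiset.replicate k 2} : ℝ) *
      (2 ^ k * k ! * (2 * m - 2 * k)!) = (2 * m)! := by
    exact_mod_cast Fintype.card_fin (2 * m) ▸
      card_cycleType_eq_replicate_two_mul (α := Fin (2 * m)) (by simpa using hk)
  rw [sum_congr rfl fun σ hσ => by
    rw [realSign_apply, sign_of_cycleType_eq_replicate_two (mem_filter.mp hσ).2,
      stepP_of_cycleType_eq_replicate_two (mem_filter.mp hσ).2], sum_const, nsmul_eq_mul,
    Nat.mul_div_cancel_left m two_pos]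
  calc _ = (-(1 - p)) ^ k * p ^ (m - k) * m.choose k *
        ((#{σ : Perm (Fin (2 * m)) | σ.cycleType = Multiset.replicate k 2} : ℝ) *
          (2 ^ k * k ! * (2 * m - 2 * k)!) / (2 * m)!) := by rw [neg_pow (1 - p)]; push_cast; ring
    _ = _ := by rw [hcard, div_self (by positivity), mul_one]

theorem sum_realSign_mul_stepP (hn : Even n) :
    ∑ σ, realSign _ σ * stepP n p σ = (2 * p - 1) ^ (n / 2) := by
  obtain ⟨m, rfl⟩ := hn.two_dvd
  have hmaps : ∀ σ ∈ ({σ | σ ^ 2 = 1} : Finset (Perm (Fin (2 * m)))),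
      σ.cycleType.card ∈ range (m + 1) := fun σ hσ => by
    have hsupp := card_support_of_cycleType_eq_replicate_two
      (cycleType_eq_replicate_two_iff.mpr ⟨(mem_filter.mp hσ).2, rfl⟩)
    have hle := σ.support.card_le_univ
    rw [Fintype.card_fin] at hle
    rw [mem_range]
    omega
  calc ∑ σ, realSign _ σ * stepP (2 * m) p σ
      = ∑ σ with σ ^ 2 = 1, realSign _ σ * stepP (2 * m) p σ :=
        (sum_filter_of_ne fun σ _ hσ => by_contra fun h =>
          hσ (by rw [stepP_eq_zero_of_sq_ne_one h, mul_zero])).symm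
    _ = ∑ k ∈ range (m + 1), ∑ σ with σ.cycleType = Multiset.replicate k 2,
          realSign _ σ * stepP (2 * m) p σ := by
        rw [← sum_fiberwise_of_maps_to hmaps]
        simp only [filter_filter, cycleType_eq_replicate_two_iff]
    _ = (2 * p - 1) ^ (2 * m / 2) := by
        rw [sum_congr rfl fun k hk => sum_realSign_mul_stepP_of_cycleType
          (Nat.lt_succ_iff.mp (mem_range.mp hk)), ← add_pow, Nat.mul_div_cancel_left m two_pos]
        ring

end InvolutionWalk

theorem one_sub_two_mul_le_two_mul_sub_one_pow {e : ℕ} (he : Even e) {p : ℝ} (hp : p ≤ 1) :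
    1 - 2 * e * p ≤ (2 * p - 1) ^ e :=
  calc 1 - 2 * e * p = 1 + e * (-(2 * p)) := by ring
    _ ≤ (1 + -(2 * p)) ^ e := one_add_mul_le_pow (by linarith) e
    _ = (2 * p - 1) ^ e := by rw [← he.neg_pow]; ring

theorem stmt3_general (n : ℕ) (hn : 2 ≤ n) (hne : Even n) (p : ℝ) (hp0 : 0 < p) (hp : p ≤ 1 / 4)
    (t : ℕ) (hte : Even t) (htle : (t : ℝ) ≤ 1 / ((n : ℝ) ^ 2 * p)) :
    tvDist n p t ≥ 1 / 2 - 1 / n := by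
  have : Nontrivial (Fin n) := Fin.nontrivial_iff_two_le.mpr hn
  have hn0 : (0 : ℝ) < n := by exact_mod_cast (by omega : 0 < n)
  have hsign : ∑ g, realSign _ g * convPow n p t g = (2 * p - 1) ^ (n / 2 * t) := by
    rw [sum_mul_convPow, sum_realSign_mul_stepP hne, pow_mul]
  have hsteps : 2 * ((n / 2 * t : ℕ) : ℝ) * p ≤ 1 / n := by
    have hcast : 2 * ((n / 2 * t : ℕ) : ℝ) = n * t := by
      norm_cast; rw [← mul_assoc, Nat.mul_div_cancel' hne.two_dvd]
    have htn : t * (n ^ 2 * p) ≤ 1 := (le_div_iff₀ (by positivity)).mp htle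
    rw [hcast, le_div_iff₀ hn0]
    linarith
  have hbound : 1 - 1 / n ≤ ∑ g, |convPow n p t g - 1 / n !| :=
    calc 1 - 1 / n ≤ 1 - 2 * ((n / 2 * t : ℕ) : ℝ) * p := by linarith
      _ ≤ (2 * p - 1) ^ (n / 2 * t) :=
        one_sub_two_mul_le_two_mul_sub_one_pow (hte.mul_left _) (by linarith)
      _ ≤ |∑ g, realSign _ g * convPow n p t g| := hsign ▸ le_abs_self _
      _ ≤ _ := abs_sum_realSign_mul_le _ _
  have : 0 ≤ 1 / (n : ℝ) := by positivity
  rw [tvDist, ge_iff_le]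
  linarith

/-- For small `p` and few steps, the involution walk is far from uniform. -/
theorem stmt3 (n : ℕ) (hn : 2 ≤ n) (hne : Even n) (p : ℝ) (hp0 : 0 < p) (hp : p ≤ 1 / 4)
    (t : ℕ) (ht : 0 < t) (hte : Even t) (htle : (t : ℝ) ≤ 1 / ((n : ℝ) ^ 2 * p)) :
    tvDist n p t ≥ 1 / 2 - 1 / n :=
  stmt3_general n hn hne p hp0 hp t hte htle
end

section
/- Let n ≥ 2 be an even integer, let i be an integer with 0 ≤ i ≤ n − 1, and let p be a real number. Then Σ_{0 ≤ j ≤ i, i − j even} M₃(n/2 − 1; j, (i−j)/2, (n−i−j−2)/2) · (2p)^j · (2p−1)^{(i−j)/2} + Σ_{0 ≤ j ≤ i, i − j odd} M₃(n/2 − 1; j, (i−j−1)/2, (n−i−j−1)/2) · (2p)^j · (2p−1)^{(i−j+1)/2} = Σ_{k ≥ 0} Σ_{l ≥ 0, k + l ≤ n/2} M(n/2; k, l) · (−1)^l · p^{n/2−k−l} · (1−p)^{k+l} · C̃(n − 2k − 2l − 1, i − 2l). Here M₃(m; a, b, c) = m!/(a! b! c!) when a, b, c are nonnegative integers summing to m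 (and 0 otherwise), M(m; a, b) = m!/(a! b! (m−a−b)!), and C̃(m, r) is the generalized binomial coefficient for integer m: C̃(m, r) = m(m−1)⋯(m−r+1)/r! for integers r ≥ 0 (so C̃(−1, r) = (−1)^r) and C̃(m, r) = 0 for r < 0. -/
open Finset

/-- `M(m; a, b) = m!/(a! b! (m−a−b)!)` when `a + b ≤ m`, and `0` otherwise. -/
noncomputable def Mcoef (m a b : ℕ) : ℝ :=
  if a + b ≤ m then
    (Nat.factorial m : ℝ) /
      ((Nat.factorial a : ℝ) * (Nat.factorial b : ℝ) * (Nat.factorial (m - a - b) : ℝ))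
  else 0

/-- `M₃(m; a, b, c) = m!/(a! b! c!)` when `a, b, c` are nonnegative integers with
`a + b + c = m`, and `0` otherwise (in particular when some argument is not a
nonnegative integer). -/
noncomputable def M3 (m : ℕ) (a b c : ℚ) : ℝ :=
  if 0 ≤ a ∧ 0 ≤ b ∧ 0 ≤ c ∧ a.den = 1 ∧ b.den = 1 ∧ c.den = 1 ∧ a + b + c = (m : ℚ) then
    (Nat.factorial m : ℝ) /
      ((Nat.factorial a.num.toNat : ℝ) * (Nat.factorial b.num.toNat : ℝ) *
        (Nat.factorial c.num.toNat : ℝ))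
  else 0

/-- Ordinary binomial coefficient `C(a, b)` for integers, `0` when `b < 0` or `b > a`. -/
noncomputable def Cb (a b : ℤ) : ℝ :=
  if 0 ≤ b ∧ b ≤ a then ((a.toNat).choose b.toNat : ℝ) else 0

/-- Generalized binomial coefficient `C̃(m, r) = m(m−1)⋯(m−r+1)/r!` for integer `m`
and integer `r ≥ 0`, and `0` for `r < 0`. -/
noncomputable def Cgen (m r : ℤ) : ℝ :=
  if 0 ≤ r then (∏ k ∈ Finset.range r.toNat, ((m : ℝ) - (k : ℝ))) / (Nat.factorial r.toNat : ℝ)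
  else 0

/-! Both sides are the `i`-th coefficient of one power series. Put
`T = 1 + 2pX + (2p-1)X² = (1 + X)(1 + (2p-1)X)` and `M = n/2 - 1`. Expanding `T^M` trinomially,
the two sums on the left are `[X^i] T^M` and `[X^i] (2p-1)X·T^M` (the `M₃` are the trinomial
coefficients, `j` counting the factors `2pX`). On the right, `C̃(m, r) = [X^r] (1 + X)^m` for the
binomial series, so the right side is the trinomial expansion of
`[X^i] ((1-p) - (1-p)X² + p(1+X)²)^{M+1} (1+X)^{-1}`, and that base is again `T`. Finally
`T^{M+1} (1+X)^{-1} = T^M (1 + (2p-1)X)`. -/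

lemma add_add_pow {R : Type*} [CommSemiring R] (a b c : R) (m : ℕ) :
    (a + b + c) ^ m = ∑ k ∈ range (m + 1), ∑ l ∈ range (m + 1 - k),
      a ^ k * b ^ l * c ^ (m - k - l) * (m.choose k * (m - k).choose l) := by
  rw [add_assoc, add_pow]
  refine sum_congr rfl fun k hk => ?_
  rw [add_pow, mul_sum, sum_mul, Nat.sub_add_comm (by simpa [Nat.lt_succ_iff] using hk)]
  refine sum_congr rfl fun l _ => ?_
  ring

lemma sum_filter_sub_mod_two_eq_zero {A : Type*} [AddCommMonoid A] (f : ℕ → A) (i : ℕ) :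
    ∑ j ∈ (range (i + 1)).filter (fun j => (i - j) % 2 = 0), f j =
      ∑ b ∈ range (i / 2 + 1), f (i - 2 * b) := by
  refine sum_nbij' (fun j => (i - j) / 2) (fun b => i - 2 * b) ?_ ?_ ?_ ?_ ?_ <;>
    intro j hj <;> simp only [mem_filter, mem_range] at hj ⊢
  all_goals first | omega | (congr 1; omega)

lemma sum_filter_sub_mod_two_eq_one {A : Type*} [AddCommMonoid A] (f : ℕ → A) (i : ℕ) :
    ∑ j ∈ (range (i + 1)).filter (fun j => (i - j) % 2 = 1), f j =
      ∑ b ∈ range ((i + 1) / 2), f (i - 1 - 2 * b) := by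
  refine sum_nbij' (fun j => (i - j) / 2) (fun b => i - 1 - 2 * b) ?_ ?_ ?_ ?_ ?_ <;>
    intro j hj <;> simp only [mem_filter, mem_range] at hj ⊢
  all_goals first | omega | (congr 1; omega)

lemma Mcoef_eq_choose_mul_choose {m k l : ℕ} (h : k + l ≤ m) :
    Mcoef m k l = m.choose k * (m - k).choose l := by
  rw [Mcoef, if_pos h, Nat.cast_choose ℝ (by omega : k ≤ m),
    Nat.cast_choose ℝ (by omega : l ≤ m - k), Nat.sub_sub]
  field_simp

lemma M3_natCast_sub (M j b : ℕ) :
    M3 M j b ((M : ℚ) - j - b) = M.choose b * (M - b).choose j := by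
  by_cases h : j + b ≤ M
  · have hc : (M : ℚ) - j - b = ((M - j - b : ℕ) : ℚ) := by push_cast [Nat.sub_sub, h]; ring
    rw [hc, M3, if_pos ⟨by positivity, by positivity, by positivity, Rat.den_natCast _,
      Rat.den_natCast _, Rat.den_natCast _, by push_cast [Nat.sub_sub, h]; ring⟩]
    simp only [Rat.num_natCast, Int.toNat_natCast]
    rw [Nat.cast_choose ℝ (by omega : b ≤ M), Nat.cast_choose ℝ (by omega : j ≤ M - b),
      Nat.sub_right_comm M b j]
    field_simp
  · rw [M3, if_neg fun ⟨_, _, hc, _⟩ => h (by exact_mod_cast (by linarith : (j : ℚ) + b ≤ M))]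
    rcases le_or_gt b M with hb | hb
    · rw [Nat.choose_eq_zero_of_lt (by omega : M - b < j), Nat.cast_zero, mul_zero]
    · rw [Nat.choose_eq_zero_of_lt hb, Nat.cast_zero, zero_mul]

open PowerSeries

lemma Cgen_natCast (z : ℤ) (r : ℕ) : Cgen z r = Ring.choose z r := by
  have hprod : ∏ k ∈ range r, ((z : ℝ) - k) = ((r.factorial * Ring.choose z r : ℤ) : ℝ) := by
    rw [← nsmul_eq_mul, ← Ring.descPochhammer_eq_factorial_smul_choose, ← Polynomial.eval_eq_smeval,
      descPochhammer_eval_eq_prod_range]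
    push_cast; rfl
  rw [Cgen, if_pos (Int.natCast_nonneg r), Int.toNat_natCast, hprod]
  push_cast
  field_simp

lemma Cgen_of_neg (z : ℤ) {r : ℤ} (hr : r < 0) : Cgen z r = 0 := if_neg (not_le.2 hr)

lemma coeff_binomialSeries (z : ℤ) (i : ℕ) : coeff i (binomialSeries ℝ z) = Cgen z i := by
  rw [binomialSeries_coeff, Cgen_natCast, zsmul_eq_mul, mul_one]

lemma coeff_X_pow_mul_binomialSeries (z : ℤ) (d i : ℕ) :
    coeff i (X ^ d * binomialSeries ℝ z) = Cgen z (i - d) := by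
  rw [coeff_X_pow_mul']
  split_ifs with h
  · rw [coeff_binomialSeries, Nat.cast_sub h]
  · rw [Cgen_of_neg _ (by omega)]

lemma one_add_X_pow_mul_binomialSeries (d : ℕ) (z : ℤ) :
    (1 + X) ^ d * binomialSeries ℝ z = binomialSeries ℝ ((d : ℤ) + z) := by
  rw [← binomialSeries_nat (R := ℤ), binomialSeries_add]

lemma one_add_X_mul_binomialSeries_neg_one : (1 + X) * binomialSeries ℝ (-1 : ℤ) = 1 := by
  simpa using one_add_X_pow_mul_binomialSeries 1 (-1)

lemma coeff_one_add_C_mul_X_pow {R : Type*} [CommRing R] (u : R) (K r : ℕ) :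
    coeff r ((1 + C u * X) ^ K) = K.choose r * u ^ r := by
  rw [← rescale_X, ← map_one (rescale u), ← map_add, ← map_pow, coeff_rescale,
    ← binomialSeries_nat (R := ℤ), binomialSeries_coeff, Ring.choose_natCast]
  simp [mul_comm]

lemma coeff_one_add_C_mul_X_add_C_mul_X_sq_pow {R : Type*} [CommRing R] (u v : R) (M i : ℕ) :
    coeff i ((1 + C u * X + C v * X ^ 2) ^ M) =
      ∑ b ∈ range (i / 2 + 1),
        M.choose b * (M - b).choose (i - 2 * b) * u ^ (i - 2 * b) * v ^ b := by
  rw [show 1 + C u * X + C v * X ^ 2 = C v * X ^ 2 + (1 + C u * X) by ring, add_pow, map_sum]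
  have hterm : ∀ b, coeff i ((C v * X ^ 2) ^ b * (1 + C u * X) ^ (M - b) * (M.choose b : R⟦X⟧)) =
      if 2 * b ≤ i then
        M.choose b * (M - b).choose (i - 2 * b) * u ^ (i - 2 * b) * v ^ b else 0 := by
    intro b
    rw [mul_pow, ← map_pow, ← pow_mul, ← map_natCast C, mul_comm, ← mul_assoc, ← mul_assoc,
      ← map_mul, mul_assoc, coeff_C_mul, coeff_X_pow_mul']
    split_ifs
    · rw [coeff_one_add_C_mul_X_pow]; ring
    · rw [mul_zero]
  simp only [hterm, ← sum_filter]
  refine sum_subset (fun b => by simp; omega) fun b hb hb' => ?_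
  simp only [mem_range, mem_filter, not_and, not_le] at hb hb'
  rw [Nat.choose_eq_zero_of_lt (by omega), Nat.cast_zero, zero_mul, zero_mul, zero_mul]

section Trinomial

variable {M n : ℕ} (hn : n = 2 * M + 2) (u v : ℝ) (i : ℕ)
include hn

lemma sum_M3_even_eq_coeff :
    ∑ j ∈ (range (i + 1)).filter (fun j => (i - j) % 2 = 0),
        M3 M (j : ℚ) (((i : ℚ) - j) / 2) (((n : ℚ) - i - j - 2) / 2) * u ^ j * v ^ ((i - j) / 2) =
      coeff i ((1 + C u * X + C v * X ^ 2) ^ M) := by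
  rw [sum_filter_sub_mod_two_eq_zero, coeff_one_add_C_mul_X_add_C_mul_X_sq_pow]
  refine sum_congr rfl fun b hb => ?_
  have hbi : 2 * b ≤ i := by rw [mem_range] at hb; omega
  have hb2 : ((i : ℚ) - (i - 2 * b : ℕ)) / 2 = b := by push_cast [hbi]; ring
  have hc : ((n : ℚ) - i - (i - 2 * b : ℕ) - 2) / 2 = M - (i - 2 * b : ℕ) - b := by
    push_cast [hn, hbi]; ring
  rw [hb2, hc, M3_natCast_sub, show (i - (i - 2 * b)) / 2 = b by omega]

lemma sum_M3_odd_eq_coeff :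
    ∑ j ∈ (range (i + 1)).filter (fun j => (i - j) % 2 = 1),
        M3 M (j : ℚ) (((i : ℚ) - j - 1) / 2) (((n : ℚ) - i - j - 1) / 2) * u ^ j *
          v ^ ((i - j + 1) / 2) =
      coeff i (X * C v * (1 + C u * X + C v * X ^ 2) ^ M) := by
  rw [sum_filter_sub_mod_two_eq_one, mul_assoc]
  cases i with
  | zero => simp
  | succ r =>
    rw [coeff_succ_X_mul, coeff_C_mul, coeff_one_add_C_mul_X_add_C_mul_X_sq_pow, mul_sum,
      show (r + 1 + 1) / 2 = r / 2 + 1 by omega]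
    refine sum_congr rfl fun b hb => ?_
    have hbr : 2 * b ≤ r := by rw [mem_range] at hb; omega
    have hb2 : (((r + 1 : ℕ) : ℚ) - (r + 1 - 1 - 2 * b : ℕ) - 1) / 2 = b := by
      push_cast [hbr]; ring
    have hc : ((n : ℚ) - (r + 1 : ℕ) - (r + 1 - 1 - 2 * b : ℕ) - 1) / 2 =
        M - (r - 2 * b : ℕ) - b := by
      push_cast [hn, hbr]; ring
    rw [hb2, hc, Nat.add_sub_cancel, M3_natCast_sub,
      show (r + 1 - (r - 2 * b) + 1) / 2 = b + 1 by omega]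
    ring

end Trinomial

lemma sum_Mcoef_Cgen_eq_coeff {n : ℕ} (hn : Even n) (p : ℝ) (i : ℕ) :
    ∑ k ∈ range (n / 2 + 1), ∑ l ∈ range (n / 2 + 1 - k),
        Mcoef (n / 2) k l * (-1 : ℝ) ^ l * p ^ (n / 2 - k - l) * (1 - p) ^ (k + l) *
          Cgen ((n : ℤ) - 2 * k - 2 * l - 1) ((i : ℤ) - 2 * l) =
      coeff i ((C (1 - p) + -C (1 - p) * X ^ 2 + C p * (1 + X) ^ 2) ^ (n / 2) *
        binomialSeries ℝ (-1 : ℤ)) := by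
  rw [add_add_pow, sum_mul, map_sum]
  refine sum_congr rfl fun k hk => ?_
  rw [sum_mul, map_sum]
  refine sum_congr rfl fun l hl => ?_
  have hkl : k + l ≤ n / 2 := by rw [mem_range] at hk hl; omega
  have hterm : C (1 - p) ^ k * (-C (1 - p) * X ^ 2) ^ l * (C p * (1 + X) ^ 2) ^ (n / 2 - k - l) *
        (((n / 2).choose k : ℝ⟦X⟧) * ((n / 2 - k).choose l : ℝ⟦X⟧)) * binomialSeries ℝ (-1 : ℤ) =
      C (Mcoef (n / 2) k l * (-1 : ℝ) ^ l * p ^ (n / 2 - k - l) * (1 - p) ^ (k + l)) *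
        (X ^ (2 * l) * ((1 + X) ^ (2 * (n / 2 - k - l)) * binomialSeries ℝ (-1 : ℤ))) := by
    rw [mul_pow (C p), ← pow_mul]
    simp only [Mcoef_eq_choose_mul_choose hkl, map_mul, map_pow, map_neg, map_one, map_natCast]
    ring
  rw [hterm, coeff_C_mul, one_add_X_pow_mul_binomialSeries, coeff_X_pow_mul_binomialSeries]
  obtain ⟨m, rfl⟩ := hn
  congr 3
  push_cast [Nat.sub_sub, hkl]
  omega

lemma one_add_X_mul_pow_succ_mul_binomialSeries (F : ℝ⟦X⟧) (M : ℕ) :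
    ((1 + X) * F) ^ (M + 1) * binomialSeries ℝ (-1 : ℤ) = ((1 + X) * F) ^ M * F := by
  linear_combination ((1 + X) * F) ^ M * F * one_add_X_mul_binomialSeries_neg_one

theorem stmt12_general (n : ℕ) (hn : 2 ≤ n) (hne : Even n) (i : ℕ) (p : ℝ) :
    (∑ j ∈ (Finset.range (i + 1)).filter (fun j => (i - j) % 2 = 0),
        M3 (n / 2 - 1) (j : ℚ) (((i : ℚ) - j) / 2) (((n : ℚ) - i - j - 2) / 2) *
          (2 * p) ^ j * (2 * p - 1) ^ ((i - j) / 2))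
    + (∑ j ∈ (Finset.range (i + 1)).filter (fun j => (i - j) % 2 = 1),
        M3 (n / 2 - 1) (j : ℚ) (((i : ℚ) - j - 1) / 2) (((n : ℚ) - i - j - 1) / 2) *
          (2 * p) ^ j * (2 * p - 1) ^ ((i - j + 1) / 2))
    = ∑ k ∈ Finset.range (n / 2 + 1), ∑ l ∈ Finset.range (n / 2 + 1 - k),
        Mcoef (n / 2) k l * (-1 : ℝ) ^ l * p ^ (n / 2 - k - l) * (1 - p) ^ (k + l) *
          Cgen ((n : ℤ) - 2 * k - 2 * l - 1) ((i : ℤ) - 2 * l) := by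
  set M := n / 2 - 1
  have hnM : n = 2 * M + 2 := by obtain ⟨m, rfl⟩ := hne; omega
  have hfactor : (1 + C (2 * p) * X + C (2 * p - 1) * X ^ 2 : ℝ⟦X⟧) =
      (1 + X) * (1 + C (2 * p - 1) * X) := by
    simp only [map_sub, map_mul, map_ofNat, map_one]; ring
  have hsymbol : (C (1 - p) + -C (1 - p) * X ^ 2 + C p * (1 + X) ^ 2 : ℝ⟦X⟧) =
      (1 + X) * (1 + C (2 * p - 1) * X) := by
    simp only [map_sub, map_mul, map_ofNat, map_one]; ring
  rw [sum_M3_even_eq_coeff hnM, sum_M3_odd_eq_coeff hnM, ← map_add, sum_Mcoef_Cgen_eq_coeff hne,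
    hsymbol, show n / 2 = M + 1 by omega, one_add_X_mul_pow_succ_mul_binomialSeries, hfactor]
  congr 1
  ring

/-- The Murnaghan–Nakayama recursion and the character polynomial give the same
value `C(n−1,i)·ψ_{[n−i,1^i]}` for the hook eigenvalue of the involution walk:
a polynomial identity in `p` (Proposition `n-11ieig`). -/
theorem stmt12 (n : ℕ) (hn : 2 ≤ n) (hne : Even n) (i : ℕ) (hi : i ≤ n - 1) (p : ℝ) :
    (∑ j ∈ (Finset.range (i + 1)).filter (fun j => (i - j) % 2 = 0),
        M3 (n / 2 - 1) (j : ℚ) (((i : ℚ) - j) / 2) (((n : ℚ) - i - j - 2) / 2) *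
          (2 * p) ^ j * (2 * p - 1) ^ ((i - j) / 2))
    + (∑ j ∈ (Finset.range (i + 1)).filter (fun j => (i - j) % 2 = 1),
        M3 (n / 2 - 1) (j : ℚ) (((i : ℚ) - j - 1) / 2) (((n : ℚ) - i - j - 1) / 2) *
          (2 * p) ^ j * (2 * p - 1) ^ ((i - j + 1) / 2))
    = ∑ k ∈ Finset.range (n / 2 + 1), ∑ l ∈ Finset.range (n / 2 + 1 - k),
        Mcoef (n / 2) k l * (-1 : ℝ) ^ l * p ^ (n / 2 - k - l) * (1 - p) ^ (k + l) *
          Cgen ((n : ℤ) - 2 * k - 2 * l - 1) ((i : ℤ) - 2 * l) :=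
  stmt12_general n hn hne i p
end
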